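/- arXiv:1501.04681 — 4 statements merged into one kernel-verified Lean document; each statement's English description precedes it below -/
import Mathlib

section
/- For real numbers p = 2r-2, q = 2s-2 with integers r,s ≥ 2, and α = (p+q+2)/2, and any θ ∈ (0, π/2), if Σ = p+q ≥ 18 then 4α²·η₁(θ) > 0, where η₁(θ) = (2·1-1) - 2(1/α)²[(2·1-1)pq + p + q] + (1/α)²[((2·1-1)q² - 2q)cot²θ + ((2·1-1)p² - 2p)tan²θ], i.e. η₁(θ) = 1 - (2/α²)(p+q+pq) + (1/α²)[(q²-2q)cot²θ + (p²-2p)tan²θ]. -/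
/-!
Clearing `α² = ((p + q + 2) / 2)²` turns `4α²η₁` into
`(p + q + 2)² - 8(p + q + pq) + 4(A cot²θ + B tan²θ)` with `A = q² - 2q`, `B = p² - 2p`.
Since `cot θ · tan θ = 1`, AM–GM bounds the bracket below by `2√(AB)`. For `p, q > 2` and
`s = p + q ≥ 18` the resulting bound is positive: with `D = 8pq + 8s - (s + 2)²` it amounts to
`D < 8√(AB)`, and `64AB - D² = (s - 2)(2(s - 10)D + (s - 2)²(s - 18))`.
When `p = 2` the constant term is `q(q - 16) ≥ 0` and the `cot²θ` term is positive.
-/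

open Real

lemma two_sqrt_mul_le_of_mul_eq_one {A B u v : ℝ} (hA : 0 ≤ A) (hB : 0 ≤ B) (huv : u * v = 1) :
    2 * √(A * B) ≤ A * u ^ 2 + B * v ^ 2 :=
  calc 2 * √(A * B) = 2 * (√A * u) * (√B * v) := by
        rw [sqrt_mul hA]; linear_combination (-2 * √A * √B) * huv
    _ ≤ (√A * u) ^ 2 + (√B * v) ^ 2 := two_mul_le_add_sq _ _
    _ = A * u ^ 2 + B * v ^ 2 := by rw [mul_pow, mul_pow, sq_sqrt hA, sq_sqrt hB]

namespace Lawson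

variable {p q : ℝ}

lemma discr_sq_lt (hp : 2 < p) (hq : 2 < q) (hsum : 18 ≤ p + q)
    (hD : 0 ≤ 8 * p * q + 8 * (p + q) - (p + q + 2) ^ 2) :
    (8 * p * q + 8 * (p + q) - (p + q + 2) ^ 2) ^ 2 < 64 * ((q ^ 2 - 2 * q) * (p ^ 2 - 2 * p)) := by
  set D := 8 * p * q + 8 * (p + q) - (p + q + 2) ^ 2
  have key : 64 * ((q ^ 2 - 2 * q) * (p ^ 2 - 2 * p)) - D ^ 2
      = (p + q - 2) * (2 * (p + q - 10) * D + (p + q - 2) ^ 2 * (p + q - 18)) := by ring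
  have hF : 0 < 2 * (p + q - 10) * D + (p + q - 2) ^ 2 * (p + q - 18) := by
    rcases hsum.eq_or_lt with h | h
    · have hD_pos : 0 < D := by
        have : D = 8 * ((p - 2) * (q - 2)) := by linear_combination (p + q - 2) * h
        rw [this]; have := mul_pos (sub_pos.2 hp) (sub_pos.2 hq); positivity
      rw [← h]; linarith
    · have : 0 < (p + q - 2) ^ 2 * (p + q - 18) := mul_pos (by nlinarith) (by linarith)
      nlinarith
  have := mul_pos (by linarith : 0 < p + q - 2) hF
  linarith

lemma pos_add_eight_sqrt (hp : 2 < p) (hq : 2 < q) (hsum : 18 ≤ p + q) :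
    0 < (p + q + 2) ^ 2 - 8 * (p + q + p * q) + 8 * √((q ^ 2 - 2 * q) * (p ^ 2 - 2 * p)) := by
  rcases lt_or_ge (8 * p * q + 8 * (p + q) - (p + q + 2) ^ 2) 0 with hD | hD
  · linarith [sqrt_nonneg ((q ^ 2 - 2 * q) * (p ^ 2 - 2 * p))]
  · have h := (lt_sqrt hD).2 (discr_sq_lt hp hq hsum hD)
    rw [sqrt_mul (by norm_num), show (64 : ℝ) = 8 ^ 2 by norm_num, sqrt_sq (by norm_num)] at h
    linarith

lemma pos_of_mul_eq_one (hp : 2 ≤ p) (hq : 2 ≤ q) (hsum : 18 ≤ p + q) {u v : ℝ}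
    (huv : u * v = 1) :
    0 < (p + q + 2) ^ 2 - 8 * (p + q + p * q) +
      4 * ((q ^ 2 - 2 * q) * u ^ 2 + (p ^ 2 - 2 * p) * v ^ 2) := by
  wlog hpq : p ≤ q generalizing p q u v
  · have := this hq hp (by linarith) (show v * u = 1 by linarith) (by linarith)
    linarith
  rcases hp.eq_or_lt with rfl | hp
  -- at `(p, q) = (2, 16)` the AM–GM bound is `0`, so the `u²` term has to supply positivity
  · have hu : 0 < u ^ 2 := by
      have : u ≠ 0 := left_ne_zero_of_mul_eq_one huv
      positivity
    nlinarith [mul_pos (by nlinarith : (0 : ℝ) < q ^ 2 - 2 * q) hu]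
  · have := two_sqrt_mul_le_of_mul_eq_one (by nlinarith : (0 : ℝ) ≤ q ^ 2 - 2 * q)
      (by nlinarith : (0 : ℝ) ≤ p ^ 2 - 2 * p) huv
    linarith [pos_add_eight_sqrt hp (by linarith) hsum]

end Lawson

theorem stmt0 (r s : ℤ) (hr : 2 ≤ r) (hs : 2 ≤ s)
    (p q α : ℝ) (hp : p = 2 * (r : ℝ) - 2) (hq : q = 2 * (s : ℝ) - 2)
    (hα : α = (p + q + 2) / 2)
    (θ : ℝ) (hθ : θ ∈ Set.Ioo 0 (π / 2))
    (hsum : 18 ≤ p + q) :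
    0 < 4 * α ^ 2 *
      (1 - (2 / α ^ 2) * (p + q + p * q) +
        (1 / α ^ 2) * ((q ^ 2 - 2 * q) * (cos θ / sin θ) ^ 2 +
          (p ^ 2 - 2 * p) * (sin θ / cos θ) ^ 2)) := by
  have hp2 : 2 ≤ p := by
    have : (2 : ℝ) ≤ r := by exact_mod_cast hr
    linarith
  have hq2 : 2 ≤ q := by
    have : (2 : ℝ) ≤ s := by exact_mod_cast hs
    linarith
  have hsin : sin θ ≠ 0 := (sin_pos_of_pos_of_lt_pi hθ.1 (by linarith [hθ.2, pi_pos])).ne'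
  have hcos : cos θ ≠ 0 := (cos_pos_of_mem_Ioo ⟨by linarith [hθ.1, pi_pos], hθ.2⟩).ne'
  have hcot_mul_tan : cos θ / sin θ * (sin θ / cos θ) = 1 := by field_simp
  have hα0 : α ≠ 0 := by rw [hα]; linarith
  convert Lawson.pos_of_mul_eq_one hp2 hq2 hsum hcot_mul_tan using 1
  field_simp
  rw [hα]; ring
end

section
/- For integers r, s ≥ 2 with r + s ≥ 9, set p = 2r-2, q = 2s-2, α = (p+q+2)/2, β = 1.2. Then η_β(θ) = (2β-1) - 2(β/α)²[(2β-1)pq + p + q] + (β/α)²{[(2β-1)q² - 2q]cot²θ + [(2β-1)p² - 2p]tan²θ} > 0 for all θ ∈ (0, π/2). -/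
open Real

theorem disc (p q : ℝ) (hp : 2 ≤ p) (hq : 2 ≤ q) (hpq : 14 ≤ p + q)
    (D : ℝ) (hD : D = (7/20) * (p+q+2)^2 - (72/25) * ((7/5)*p*q + p + q))
    (hDneg : D < 0) :
    D^2 < 4 * ((36/25)*((7/5)*q^2 - 2*q)) * ((36/25)*((7/5)*p^2 - 2*p)) := by
  subst hD
  nlinarith [sq_nonneg (p-q), sq_nonneg (p+q-14), mul_nonneg (sub_nonneg.2 hp) (sub_nonneg.2 hq), sq_nonneg ((p-2)*(q-2)), mul_nonneg (mul_nonneg (sub_nonneg.2 hp) (sub_nonneg.2 hq)) (sub_nonneg.2 (by linarith : (14:ℝ) ≤ p+q)), sq_nonneg (p*q - 24), sq_nonneg (p+q)]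

theorem keylem (p q x y : ℝ) (hp2 : 2 ≤ p) (hq2 : 2 ≤ q) (hpq14 : 14 ≤ p + q)
    (hx : 0 < x) (hy : 0 < y)
    (D : ℝ) (hD : D = (7/20) * (p+q+2)^2 - (72/25) * ((7/5)*p*q + p + q)) :
    0 < D*(x*y)^2 + (36/25)*((7/5)*q^2-2*q)*y^4 + (36/25)*((7/5)*p^2-2*p)*x^4 := by
  have hE : 0 < (7/5)*q^2 - 2*q := by nlinarith
  have hF : 0 < (7/5)*p^2 - 2*p := by nlinarith
  rcases le_or_gt 0 D with hDpos | hDneg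
  · have h1 : 0 < (36/25)*((7/5)*q^2-2*q)*y^4 := by positivity
    have h2 : 0 < (36/25)*((7/5)*p^2-2*p)*x^4 := by positivity
    have h3 : 0 ≤ D * (x*y)^2 := mul_nonneg hDpos (sq_nonneg _)
    linarith
  · have hd := disc p q hp2 hq2 hpq14 D hD hDneg
    have hE' : 0 < (36/25)*((7/5)*q^2-2*q) := by positivity
    nlinarith [sq_nonneg (2*((36/25)*((7/5)*q^2-2*q))*y^2 + D*x^2), pow_pos hx 4, mul_pos hE' hE']

theorem stmt3 (r s : ℤ) (hr : 2 ≤ r) (hs : 2 ≤ s) (hrs : 9 ≤ r + s)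
    (p q α β : ℝ) (hp : p = 2 * (r : ℝ) - 2) (hq : q = 2 * (s : ℝ) - 2)
    (hα : α = (p + q + 2) / 2) (hβ : β = 1.2)
    (θ : ℝ) (hθ : θ ∈ Set.Ioo 0 (π / 2)) :
    0 < (2 * β - 1) - 2 * (β / α) ^ 2 * ((2 * β - 1) * p * q + p + q)
      + (β / α) ^ 2 * (((2 * β - 1) * q ^ 2 - 2 * q) * (cos θ / sin θ) ^ 2
        + ((2 * β - 1) * p ^ 2 - 2 * p) * (sin θ / cos θ) ^ 2) := by
  obtain ⟨hθ1, hθ2⟩ := hθ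
  have hpi := Real.pi_pos
  have hx : 0 < Real.sin θ := Real.sin_pos_of_pos_of_lt_pi hθ1 (by linarith)
  have hy : 0 < Real.cos θ := Real.cos_pos_of_mem_Ioo ⟨by linarith, hθ2⟩
  have hr' : (2:ℝ) ≤ (r:ℝ) := by exact_mod_cast hr
  have hs' : (2:ℝ) ≤ (s:ℝ) := by exact_mod_cast hs
  have hrs' : (9:ℝ) ≤ (r:ℝ) + (s:ℝ) := by exact_mod_cast hrs
  have hp2 : 2 ≤ p := by rw [hp]; linarith
  have hq2 : 2 ≤ q := by rw [hq]; linarith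
  have hpq14 : 14 ≤ p + q := by rw [hp, hq]; linarith
  have hα0 : 0 < α := by rw [hα]; linarith
  have key := keylem p q (Real.sin θ) (Real.cos θ) hp2 hq2 hpq14 hx hy
    ((7/20) * (p+q+2)^2 - (72/25) * ((7/5)*p*q + p + q)) rfl
  have heq : (2 * β - 1) - 2 * (β / α) ^ 2 * ((2 * β - 1) * p * q + p + q)
      + (β / α) ^ 2 * (((2 * β - 1) * q ^ 2 - 2 * q) * (Real.cos θ / Real.sin θ) ^ 2
        + ((2 * β - 1) * p ^ 2 - 2 * p) * (Real.sin θ / Real.cos θ) ^ 2)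
      = (((7/20) * (p+q+2)^2 - (72/25) * ((7/5)*p*q + p + q))*(Real.sin θ*Real.cos θ)^2
          + (36/25)*((7/5)*q^2-2*q)*(Real.cos θ)^4 + (36/25)*((7/5)*p^2-2*p)*(Real.sin θ)^4)
        / (α^2 * (Real.sin θ)^2 * (Real.cos θ)^2) := by
    rw [hβ, hα]
    have hx0 : Real.sin θ ≠ 0 := ne_of_gt hx
    have hy0 : Real.cos θ ≠ 0 := ne_of_gt hy
    have hα0' : p + q + 2 ≠ 0 := by linarith
    field_simp
    ring
  rw [heq]
  exact div_pos key (by positivity)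
end

section
/- Let p, q > 0, α > 0, β ∈ ℝ, and define ψ(θ) = φ(θ)^{2β-1}[1 + (β/α)²(q cot θ − p tan θ)²] on (0, π/2), where φ(θ) = cos^p θ sin^q θ / (cos^p θ₀ sin^q θ₀) and tan²θ₀ = q/p. If η_β(θ) > 0 for all θ ∈ (0, π/2), where η_β(θ) = (2β-1)[1 + (β/α)²(q cot θ − p tan θ)²] − 2(β/α)²(q/sin²θ + p/cos²θ), then ψ(θ) ≤ ψ(θ₀) = 1 for all θ ∈ (0, π/2). -/
open Real Set

/-!
Write `φ ^ (2β - 1) = exp ((2β - 1) (F - F θ₀))` with `F = p log cos + q log sin`, whose derivative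
is `u = q cot - p tan`. Then `ψ' = φ ^ (2β - 1) · u · η_β`. Since `u' = -(q / sin² + p / cos²) < 0`
and `u θ₀ = 0`, `u` changes sign from `+` to `-` at `θ₀`, so by `η_β > 0` the function `ψ` increases
up to `θ₀` and decreases afterwards.
-/

theorem isMaxOn_of_hasDerivAt_nonneg_of_nonpos {g g' : ℝ → ℝ} {a b x₀ : ℝ}
    (hx₀ : x₀ ∈ Ioo a b) (hg : ∀ x ∈ Ioo a b, HasDerivAt g (g' x) x)
    (hleft : ∀ x ∈ Ioo a x₀, 0 ≤ g' x) (hright : ∀ x ∈ Ioo x₀ b, g' x ≤ 0) :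
    IsMaxOn g (Ioo a b) x₀ := by
  have hcont : ContinuousOn g (Ioo a b) := fun x hx =>
    (hg x hx).continuousAt.continuousWithinAt
  have hwithin : ∀ s ⊆ Ioo a b, ∀ x ∈ s, HasDerivWithinAt g (g' x) s x :=
    fun s hs x hx => (hg x (hs hx)).hasDerivWithinAt
  refine isMaxOn_iff.2 fun x hx => (le_total x x₀).elim (fun hle => ?_) (fun hle => ?_)
  · have hsub : Ioc a x₀ ⊆ Ioo a b := Ioc_subset_Ioo_right hx₀.2
    refine monotoneOn_of_hasDerivWithinAt_nonneg (f' := g') (convex_Ioc a x₀) (hcont.mono hsub)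
      ?_ ?_ ⟨hx.1, hle⟩ ⟨hx₀.1, le_rfl⟩ hle
    · rw [interior_Ioc]; exact hwithin _ (Ioo_subset_Ioo_right hx₀.2.le)
    · rwa [interior_Ioc]
  · have hsub : Ico x₀ b ⊆ Ioo a b := Ico_subset_Ioo_left hx₀.1
    refine antitoneOn_of_hasDerivWithinAt_nonpos (f' := g') (convex_Ico x₀ b) (hcont.mono hsub)
      ?_ ?_ ⟨le_rfl, hx₀.2⟩ ⟨hle, hx.2⟩ hle
    · rw [interior_Ico]; exact hwithin _ (Ioo_subset_Ioo_left hx₀.1.le)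
    · rwa [interior_Ico]

noncomputable def logCosSin (p q θ : ℝ) : ℝ := p * log (cos θ) + q * log (sin θ)

noncomputable def cotTan (p q θ : ℝ) : ℝ := q * (cos θ / sin θ) - p * (sin θ / cos θ)

section Derivatives

variable (p q : ℝ) {x : ℝ} (hs : sin x ≠ 0) (hc : cos x ≠ 0)
include hs hc

theorem hasDerivAt_logCosSin : HasDerivAt (logCosSin p q) (cotTan p q x) x := by
  have := (((hasDerivAt_cos x).log hc).const_mul p).add (((hasDerivAt_sin x).log hs).const_mul q)
  exact this.congr_deriv (by unfold cotTan; ring)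

theorem hasDerivAt_cotTan :
    HasDerivAt (cotTan p q) (-(q / sin x ^ 2 + p / cos x ^ 2)) x := by
  have := (((hasDerivAt_cos x).div (hasDerivAt_sin x) hs).const_mul q).sub
    (((hasDerivAt_sin x).div (hasDerivAt_cos x) hc).const_mul p)
  refine this.congr_deriv ?_
  rw [show -sin x * sin x - cos x * cos x = -1 by linear_combination -sin_sq_add_cos_sq x,
    show cos x * cos x - sin x * -sin x = 1 by linear_combination sin_sq_add_cos_sq x]
  ring

end Derivatives

theorem sin_pos_of_mem_Ioo_pi_div_two {x : ℝ} (hx : x ∈ Ioo 0 (π / 2)) : 0 < sin x :=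
  sin_pos_of_pos_of_lt_pi hx.1 (by linarith [hx.2, pi_pos])

theorem cos_pos_of_mem_Ioo_pi_div_two {x : ℝ} (hx : x ∈ Ioo 0 (π / 2)) : 0 < cos x :=
  cos_pos_of_mem_Ioo ⟨by linarith [hx.1, pi_pos], hx.2⟩

theorem strictAntiOn_cotTan {p q : ℝ} (hp : 0 < p) (hq : 0 < q) :
    StrictAntiOn (cotTan p q) (Ioo 0 (π / 2)) := by
  have hderiv : ∀ x ∈ Ioo 0 (π / 2),
      HasDerivAt (cotTan p q) (-(q / sin x ^ 2 + p / cos x ^ 2)) x := fun x hx =>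
    hasDerivAt_cotTan p q (sin_pos_of_mem_Ioo_pi_div_two hx).ne'
      (cos_pos_of_mem_Ioo_pi_div_two hx).ne'
  refine strictAntiOn_of_hasDerivWithinAt_neg (f' := fun x => -(q / sin x ^ 2 + p / cos x ^ 2))
    (convex_Ioo _ _)
    (fun x hx => (hderiv x hx).continuousAt.continuousWithinAt) ?_ ?_ <;>
    rw [interior_Ioo]
  · exact fun x hx => (hderiv x hx).hasDerivWithinAt
  · intro x hx
    have := sin_pos_of_mem_Ioo_pi_div_two hx
    have := cos_pos_of_mem_Ioo_pi_div_two hx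
    simp only [neg_lt_zero]
    positivity

theorem cotTan_eq_zero_of_tan_sq {p q θ : ℝ} (hp : p ≠ 0) (hs : sin θ ≠ 0) (hc : cos θ ≠ 0)
    (htan : tan θ ^ 2 = q / p) : cotTan p q θ = 0 := by
  rw [tan_eq_sin_div_cos, div_pow, div_eq_div_iff (pow_ne_zero 2 hc) hp] at htan
  unfold cotTan
  field_simp
  linear_combination -htan

theorem cos_rpow_mul_sin_rpow {p q x : ℝ} (hs : 0 < sin x) (hc : 0 < cos x) :
    cos x ^ p * sin x ^ q = exp (logCosSin p q x) := by
  rw [logCosSin, exp_add, rpow_def_of_pos hc, rpow_def_of_pos hs, mul_comm p, mul_comm q]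

/-- `ψ` in the form `φ ^ a * (1 + c u²)` with `φ ^ a = exp (a * (F - C))`, where `F = logCosSin p q`,
`u = cotTan p q`, `a = 2β - 1`, `c = (β / α)²` and `C = F θ₀`. -/
noncomputable def psiExp (p q a c C θ : ℝ) : ℝ :=
  exp (a * (logCosSin p q θ - C)) * (1 + c * cotTan p q θ ^ 2)

theorem hasDerivAt_psiExp (p q a c C : ℝ) {x : ℝ} (hs : sin x ≠ 0) (hc : cos x ≠ 0) :
    HasDerivAt (psiExp p q a c C) (exp (a * (logCosSin p q x - C)) * cotTan p q x *
      (a * (1 + c * cotTan p q x ^ 2) - 2 * c * (q / sin x ^ 2 + p / cos x ^ 2))) x := by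
  have hexp := (((hasDerivAt_logCosSin p q hs hc).sub_const C).const_mul a).exp
  have hsq := (((hasDerivAt_cotTan p q hs hc).pow 2).const_mul c).const_add 1
  exact (hexp.mul hsq).congr_deriv (by simp only [Pi.pow_apply]; push_cast; ring)

theorem stmt6_general (p q α β θ₀ : ℝ) (hp : 0 < p) (hq : 0 < q)
    (hθ₀ : θ₀ ∈ Set.Ioo 0 (π / 2)) (htan : tan θ₀ ^ 2 = q / p)
    (φ ψ : ℝ → ℝ)
    (hφ : ∀ θ, φ θ = cos θ ^ p * sin θ ^ q / (cos θ₀ ^ p * sin θ₀ ^ q))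
    (hψ : ∀ θ, ψ θ = φ θ ^ (2 * β - 1) *
      (1 + (β / α) ^ 2 * (q * (cos θ / sin θ) - p * (sin θ / cos θ)) ^ 2))
    (hη : ∀ θ ∈ Set.Ioo 0 (π / 2),
      0 < (2 * β - 1) *
          (1 + (β / α) ^ 2 *
            (q * (cos θ / sin θ) - p * (sin θ / cos θ)) ^ 2)
        - 2 * (β / α) ^ 2 * (q / sin θ ^ 2 + p / cos θ ^ 2)) :
    ψ θ₀ = 1 ∧ ∀ θ ∈ Set.Ioo 0 (π / 2), ψ θ ≤ ψ θ₀ := by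
  have hs₀ := sin_pos_of_mem_Ioo_pi_div_two hθ₀
  have hc₀ := cos_pos_of_mem_Ioo_pi_div_two hθ₀
  have hψ_eq : ∀ x ∈ Ioo 0 (π / 2),
      ψ x = psiExp p q (2 * β - 1) ((β / α) ^ 2) (logCosSin p q θ₀) x := fun x hx => by
    rw [hψ, hφ, cos_rpow_mul_sin_rpow (sin_pos_of_mem_Ioo_pi_div_two hx)
      (cos_pos_of_mem_Ioo_pi_div_two hx), cos_rpow_mul_sin_rpow hs₀ hc₀, ← exp_sub, ← exp_mul,
      mul_comm _ (2 * β - 1)]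
    rfl
  have hu₀ : cotTan p q θ₀ = 0 := cotTan_eq_zero_of_tan_sq hp.ne' hs₀.ne' hc₀.ne' htan
  have hψ₀ : ψ θ₀ = 1 := by simp [hψ_eq θ₀ hθ₀, psiExp, hu₀]
  refine ⟨hψ₀, fun θ hθ => ?_⟩
  rw [hψ_eq θ hθ, hψ_eq θ₀ hθ₀]
  refine isMaxOn_iff.1 (isMaxOn_of_hasDerivAt_nonneg_of_nonpos hθ₀
    (fun x hx => hasDerivAt_psiExp _ _ _ _ _ (sin_pos_of_mem_Ioo_pi_div_two hx).ne'
      (cos_pos_of_mem_Ioo_pi_div_two hx).ne') (fun x hx => ?_) (fun x hx => ?_)) θ hθ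
  · have hx' : x ∈ Ioo 0 (π / 2) := ⟨hx.1, hx.2.trans hθ₀.2⟩
    have hu : 0 < cotTan p q x := hu₀ ▸ strictAntiOn_cotTan hp hq hx' hθ₀ hx.2
    exact (mul_pos (mul_pos (exp_pos _) hu) (hη x hx')).le
  · have hx' : x ∈ Ioo 0 (π / 2) := ⟨hθ₀.1.trans hx.1, hx.2⟩
    have hu : cotTan p q x < 0 := hu₀ ▸ strictAntiOn_cotTan hp hq hθ₀ hx' hx.1
    exact (mul_neg_of_neg_of_pos (mul_neg_of_pos_of_neg (exp_pos _) hu) (hη x hx')).le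

theorem stmt6 (p q α β θ₀ : ℝ) (hp : 0 < p) (hq : 0 < q) (hα : 0 < α)
    (hθ₀ : θ₀ ∈ Set.Ioo 0 (π / 2)) (htan : tan θ₀ ^ 2 = q / p)
    (φ ψ : ℝ → ℝ)
    (hφ : ∀ θ, φ θ = cos θ ^ p * sin θ ^ q / (cos θ₀ ^ p * sin θ₀ ^ q))
    (hψ : ∀ θ, ψ θ = φ θ ^ (2 * β - 1) *
      (1 + (β / α) ^ 2 * (q * (cos θ / sin θ) - p * (sin θ / cos θ)) ^ 2))
    (hη : ∀ θ ∈ Set.Ioo 0 (π / 2),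
      0 < (2 * β - 1) *
          (1 + (β / α) ^ 2 *
            (q * (cos θ / sin θ) - p * (sin θ / cos θ)) ^ 2)
        - 2 * (β / α) ^ 2 * (q / sin θ ^ 2 + p / cos θ ^ 2)) :
    ψ θ₀ = 1 ∧ ∀ θ ∈ Set.Ioo 0 (π / 2), ψ θ ≤ ψ θ₀ :=
  stmt6_general p q α β θ₀ hp hq hθ₀ htan φ ψ hφ hψ hη
end

section
/- For p = 4, q = 10, α = 7.5, the function ψ(θ) = (1/τ) cos⁴θ sin^{10}θ [1 + (1/7.5)²(10 cot θ − 4 tan θ)²] with τ = (4/14)²(10/14)⁵ satisfies ψ(θ) < 1 for all θ ∈ (0, π/2) with θ ≥ 1.2; in particular the 'second peak' of ψ occurs only in (θ₀, 1.2) where θ₀ = arctan√(5/2). -/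
open Real

theorem stmt19 (τ : ℝ) (hτ : τ = (4 / 14 : ℝ) ^ 2 * (10 / 14) ^ 5)
    (ψ : ℝ → ℝ)
    (hψ : ∀ θ, ψ θ = (1 / τ) * cos θ ^ 4 * sin θ ^ 10 *
      (1 + (1 / 7.5) ^ 2 *
        (10 * (cos θ / sin θ) - 4 * (sin θ / cos θ)) ^ 2)) :
    ∀ θ ∈ Set.Ioo 0 (π / 2), 1.2 ≤ θ → ψ θ < 1 := by
  intro θ hθ hθ12
  obtain ⟨hθ0, hθπ⟩ := hθ
  have hπ : (3.14 : ℝ) < π := by linarith [Real.pi_gt_d6]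
  have hs : 0 < sin θ := Real.sin_pos_of_pos_of_lt_pi hθ0 (by linarith)
  have hc : 0 < cos θ := Real.cos_pos_of_mem_Ioo ⟨by linarith, hθπ⟩
  -- bound sin 0.6 from below
  have hsin06 : (0.55725 : ℝ) ≤ sin 0.6 := by
    have hb := Real.sin_bound (x := 0.6) (by rw [abs_of_nonneg] <;> norm_num)
    rw [abs_of_nonneg (by norm_num : (0:ℝ) ≤ 0.6), abs_le] at hb
    nlinarith [hb.1]
  have hsin06' : sin 0.6 ≤ 1 := Real.sin_le_one _
  -- bound cos 1.2 from above
  have hcos12 : cos 1.2 ≤ 0.37895 := by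
    have h12 : (1.2 : ℝ) = 2 * 0.6 := by norm_num
    have hcs : sin 0.6 ^ 2 + cos 0.6 ^ 2 = 1 := Real.sin_sq_add_cos_sq 0.6
    rw [h12, Real.cos_two_mul]
    nlinarith [sq_nonneg (sin 0.6 - 0.55725), mul_self_nonneg (sin (0.6:ℝ))]
  have hcθ : cos θ ≤ 0.37895 := by
    have := Real.cos_le_cos_of_nonneg_of_le_pi (by norm_num : (0:ℝ) ≤ 1.2)
      (by linarith) hθ12
    linarith
  have hx : cos θ ^ 2 ≤ 0.14361 := by nlinarith
  have hx0 : 0 < cos θ ^ 2 := by positivity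
  have hsc : sin θ ^ 2 = 1 - cos θ ^ 2 := by
    have := Real.sin_sq_add_cos_sq θ; linarith
  have hτ' : (0:ℝ) < τ := by rw [hτ]; norm_num
  rw [hψ]
  have heq : (1 / τ) * cos θ ^ 4 * sin θ ^ 10 *
      (1 + (1 / 7.5) ^ 2 *
        (10 * (cos θ / sin θ) - 4 * (sin θ / cos θ)) ^ 2)
      = (1 / τ) * ((cos θ ^ 2) ^ 2 * (sin θ ^ 2) ^ 5
        + (4 / 225) * (cos θ ^ 2) * (sin θ ^ 2) ^ 4 *
          (10 * cos θ ^ 2 - 4 * sin θ ^ 2) ^ 2) := by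
    have hs' := hs.ne'
    have hc' := hc.ne'
    field_simp
    ring
  rw [heq, hsc, hτ]
  set x := cos θ ^ 2 with hxdef
  rw [div_mul_eq_mul_div, div_lt_one (by norm_num)]
  nlinarith [sq_nonneg x, sq_nonneg (x - 0.14361), mul_nonneg (mul_nonneg hx0.le hx0.le) hx0.le,
    mul_nonneg hx0.le (sub_nonneg.2 hx), sq_nonneg (x - 0.07), sq_nonneg (x*x - 0.01),
    mul_nonneg (mul_nonneg hx0.le hx0.le) (sub_nonneg.2 hx),
    mul_nonneg (mul_nonneg (mul_nonneg hx0.le hx0.le) hx0.le) (sub_nonneg.2 hx),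
    mul_nonneg (mul_nonneg (mul_nonneg (mul_nonneg hx0.le hx0.le) hx0.le) hx0.le) (sub_nonneg.2 hx),
    mul_nonneg (sub_nonneg.2 hx) (sub_nonneg.2 hx)]
end
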